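/- In a smooth travel groupoid (V, *), for all distinct u, v ∈ V with V finite, there exists k ≥ 1 such that u *^k v = v. -/
import Mathlib


def iter {V : Type*} (op : V → V → V) (u v : V) : ℕ → V
  | 0 => u
  | i + 1 => op (iter op u v i) v

section aux
variable {V : Type*} (op : V → V → V)

lemma iter_shift (u v : V) (i : ℕ) : ∀ n, iter op u v (i + n) = iter op (iter op u v i) v n
  | 0 => rfl
  | n + 1 => by
      show iter op u v (i + n + 1) = _
      rw [iter, iter, iter_shift u v i n]

lemma my_idem (t1 : ∀ u v : V, op (op u v) u = u)
    (t2 : ∀ u v : V, op (op u v) v = u → u = v) (u : V) : op u u = u := by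
  apply t2
  rw [t1 u u]

lemma my_L (t1 : ∀ u v : V, op (op u v) u = u) (x v : V) :
    op x (op x v) = op x v := by
  have h2 := t1 (op x v) x
  rw [t1 x v] at h2
  exact h2

lemma my_chain (t1 : ∀ u v : V, op (op u v) u = u)
    (t4 : ∀ u v w : V, op u v = op u w → op u (op w v) = op u v) (u v : V) :
    ∀ n : ℕ, op u (iter op u v (n + 1)) = op u v
  | 0 => my_L op t1 u v
  | n + 1 => t4 u v (iter op u v (n + 1)) (my_chain t1 t4 u v n).symm

end aux

theorem smooth_reaches {V : Type*} [Fintype V] (op : V → V → V)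
    (t1 : ∀ u v : V, op (op u v) u = u)
    (t2 : ∀ u v : V, op (op u v) v = u → u = v)
    (t4 : ∀ u v w : V, op u v = op u w → op u (op w v) = op u v) :
    ∀ u v : V, u ≠ v → ∃ k : ℕ, 1 ≤ k ∧ iter op u v k = v := by
  intro u v huv
  -- pigeonhole: some i < j with equal iterates
  obtain ⟨i, j, hne, hij⟩ : ∃ i j : ℕ, i ≠ j ∧ iter op u v i = iter op u v j := by
    obtain ⟨i, j, hne, hij⟩ := Finite.exists_ne_map_eq_of_infinite (iter op u v)
    exact ⟨i, j, hne, hij⟩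
  -- wlog i < j
  wlog hlt : i < j generalizing i j
  · exact this j i hne.symm hij.symm (by omega)
  set a := iter op u v i with ha
  obtain ⟨d, hd⟩ : ∃ d : ℕ, j = i + (d + 1) := ⟨j - i - 1, by omega⟩
  have hcyc : iter op a v (d + 1) = a := by
    rw [ha, ← iter_shift, ← hd]; exact hij.symm
  have key : op a v = a := by
    have h := my_chain op t1 t4 a v d
    rw [hcyc, my_idem op t1 t2 a] at h
    exact h.symm
  have hav : a = v := (t2 a v (by rw [key, key]))
  refine ⟨i, ?_, hav⟩
  rcases Nat.eq_zero_or_pos i with h0 | h1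
  · exact absurd (by rw [ha, h0] at hav; exact hav) huv
  · exact h1
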